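/- A nonzero tripartite qubit state u with coefficients x_{ijk} is completely separable (u = x ⊗ y ⊗ z with x, y, z ∈ ℂ²) if and only if the six determinants det(k)₃ (k=1,…,6) all vanish and additionally x_{000}x_{110} − x_{010}x_{100} = 0 and x_{001}x_{111} − x_{011}x_{101} = 0. -/
import Mathlib
open scoped TensorProduct
noncomputable def e : Fin 2 → (Fin 2 → ℂ) := fun i => Pi.single i 1
/-- Coordinate functional on the triple tensor product. -/
noncomputable def stmt8aux_phi (i j k : Fin 2) :
    (((Fin 2 → ℂ) ⊗[ℂ] (Fin 2 → ℂ)) ⊗[ℂ] (Fin 2 → ℂ)) →ₗ[ℂ] ℂ :=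
  (LinearMap.mul' ℂ ℂ) ∘ₗ
    (TensorProduct.map ((LinearMap.mul' ℂ ℂ) ∘ₗ
      TensorProduct.map (LinearMap.proj i) (LinearMap.proj j)) (LinearMap.proj k))
lemma stmt8aux_basis (v : Fin 2 → ℂ) : v = v 0 • e 0 + v 1 • e 1 := by
  funext t
  fin_cases t <;> simp [e, Pi.single_apply]
lemma stmt8aux_expand (a b c : Fin 2 → ℂ) :
    (a ⊗ₜ[ℂ] b) ⊗ₜ[ℂ] c
      = ∑ i, ∑ j, ∑ k, (a i * b j * c k) • ((e i ⊗ₜ[ℂ] e j) ⊗ₜ[ℂ] e k) := by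
  conv_lhs => rw [stmt8aux_basis a, stmt8aux_basis b, stmt8aux_basis c]
  simp only [Fin.sum_univ_two, TensorProduct.add_tmul, TensorProduct.tmul_add,
    TensorProduct.smul_tmul, TensorProduct.tmul_smul, smul_smul]
  module
/-- A nonzero tripartite qubit state is completely separable iff the six
determinants `det(k)₃` vanish together with
`x₀₀₀x₁₁₀ − x₀₁₀x₁₀₀ = 0` and `x₀₀₁x₁₁₁ − x₀₁₁x₁₀₁ = 0`. -/
theorem stmt8 (x : Fin 2 → Fin 2 → Fin 2 → ℂ)
    (u : ((Fin 2 → ℂ) ⊗[ℂ] (Fin 2 → ℂ)) ⊗[ℂ] (Fin 2 → ℂ))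
    (hu : u = ∑ i, ∑ j, ∑ k, x i j k • ((e i ⊗ₜ[ℂ] e j) ⊗ₜ[ℂ] e k))
    (hu0 : u ≠ 0) :
    (∃ a b c : Fin 2 → ℂ, u = (a ⊗ₜ[ℂ] b) ⊗ₜ[ℂ] c) ↔
      (x 0 0 0 * x 0 1 1 - x 0 0 1 * x 0 1 0 = 0 ∧
       x 0 0 0 * x 1 0 1 - x 0 0 1 * x 1 0 0 = 0 ∧
       x 0 0 0 * x 1 1 1 - x 0 0 1 * x 1 1 0 = 0 ∧
       x 0 1 0 * x 1 0 1 - x 0 1 1 * x 1 0 0 = 0 ∧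
       x 0 1 0 * x 1 1 1 - x 0 1 1 * x 1 1 0 = 0 ∧
       x 1 0 0 * x 1 1 1 - x 1 0 1 * x 1 1 0 = 0 ∧
       x 0 0 0 * x 1 1 0 - x 0 1 0 * x 1 0 0 = 0 ∧
       x 0 0 1 * x 1 1 1 - x 0 1 1 * x 1 0 1 = 0) := by
  constructor
  · rintro ⟨a, b, c, habc⟩
    have hcoef : ∀ i j k, x i j k = a i * b j * c k := by
      intro i j k
      have h2 : stmt8aux_phi i j k u = a i * b j * c k := by
        rw [habc]; simp [stmt8aux_phi, mul_assoc]
      rw [← h2, hu]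
      fin_cases i <;> fin_cases j <;> fin_cases k <;>
        simp [stmt8aux_phi, e, Pi.single_apply, Fin.sum_univ_two]
    simp only [hcoef]
    refine ⟨by ring, by ring, by ring, by ring, by ring, by ring, by ring, by ring⟩
  · rintro ⟨h1, h2, h3, h4, h5, h6, h7, h8⟩
    -- all 2×2 minors of each slice k vanish
    have hs : ∀ i j i' j' k, x i j k * x i' j' k = x i j' k * x i' j k := by
      simp only [Fin.forall_fin_two]
      repeat' constructor
      all_goals
        first
        | ring1
        | linear_combination h7
        | linear_combination -h7
        | linear_combination h8
        | linear_combination -h8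
    -- all 2×2 minors of the third flattening vanish
    have hf : ∀ i j k i' j' k', x i j k * x i' j' k' = x i j k' * x i' j' k := by
      simp only [Fin.forall_fin_two]
      repeat' constructor
      all_goals
        first
        | ring1
        | linear_combination h1
        | linear_combination -h1
        | linear_combination h2
        | linear_combination -h2
        | linear_combination h3
        | linear_combination -h3
        | linear_combination h4
        | linear_combination -h4
        | linear_combination h5
        | linear_combination -h5
        | linear_combination h6
        | linear_combination -h6
    -- there is a nonzero coefficient
    have hx0 : ∃ i j k, x i j k ≠ 0 := by
      by_contra h
      push_neg at h
      exact hu0 (by rw [hu]; simp [h])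
    obtain ⟨i0, j0, k0, ht⟩ := hx0
    set t := x i0 j0 k0 with htdef
    refine ⟨fun i => x i j0 k0, fun j => x i0 j k0,
      fun k => (t * t)⁻¹ * x i0 j0 k, ?_⟩
    have hxv : ∀ i j k,
        x i j k = x i j0 k0 * x i0 j k0 * ((t * t)⁻¹ * x i0 j0 k) := by
      intro i j k
      have key : x i j0 k0 * x i0 j k0 * x i0 j0 k = x i j k * (t * t) := by
        calc x i j0 k0 * x i0 j k0 * x i0 j0 k
            = x i j k0 * x i0 j0 k0 * x i0 j0 k := by rw [hs i j0 i0 j k0]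
          _ = (x i j k0 * x i0 j0 k) * x i0 j0 k0 := by ring
          _ = (x i j k * x i0 j0 k0) * x i0 j0 k0 := by rw [hf i j k0 i0 j0 k]
          _ = x i j k * (t * t) := by rw [← htdef]; ring
      have htt : (t * t) ≠ 0 := mul_ne_zero ht ht
      refine mul_right_cancel₀ htt ?_
      rw [← key]
      field_simp
    rw [hu, stmt8aux_expand]
    exact Finset.sum_congr rfl fun i _ => Finset.sum_congr rfl fun j _ =>
      Finset.sum_congr rfl fun k _ => by rw [hxv i j k]
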